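/- arXiv:2402.12709 — 6 statements merged into one kernel-verified Lean document; each statement's English description precedes it below -/
import Mathlib

section
/- Let G be a connected graph and f : G → G a simplicial map (sending each edge to an edge, never collapsing an edge to a vertex) such that there is an edge E₀ = {x, y} with f(x) = y and f(y) = x, and every edge of G is eventually mapped to E₀ under iteration of f. Then G is bipartite. -/
/-- A connected graph with a simplicial self-map `f` having a
2-periodic fixed edge `E₀ = {x, y}` (with `f x = y`, `f y = x`) to which every
edge is eventually mapped is bipartite. -/
theorem fat_gasket_fatou_graph_bipartite {V : Type*} (G : SimpleGraph V)
    (hconn : G.Connected) (f : V → V)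
    (hf : ∀ ⦃u v⦄, G.Adj u v → G.Adj (f u) (f v))
    (x y : V) (hE : G.Adj x y) (hx : f x = y) (hy : f y = x)
    (habs : ∀ e ∈ G.edgeSet, ∃ n : ℕ, Sym2.map (f^[n]) e = s(x, y)) :
    ∃ c : V → Bool, ∀ ⦃u v⦄, G.Adj u v → c u ≠ c v := by
  classical
  have hne : x ≠ y := hE.ne
  -- iterates of f on x
  have hxk : ∀ k, (f^[k] x = x ∧ k % 2 = 0) ∨ (f^[k] x = y ∧ k % 2 = 1) := by
    intro k
    induction k with
    | zero => left; simp
    | succ k ih =>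
      rcases ih with ⟨h1, h2⟩ | ⟨h1, h2⟩
      · right
        rw [Function.iterate_succ_apply', h1, hx]
        exact ⟨rfl, by omega⟩
      · left
        rw [Function.iterate_succ_apply', h1, hy]
        exact ⟨rfl, by omega⟩
  have hyk : ∀ k, (f^[k] y = y ∧ k % 2 = 0) ∨ (f^[k] y = x ∧ k % 2 = 1) := by
    intro k
    have : f^[k] y = f^[k+1] x := by
      rw [Function.iterate_succ_apply, hx]
    rcases hxk (k+1) with ⟨h1, h2⟩ | ⟨h1, h2⟩
    · right
      exact ⟨by rw [this, h1], by omega⟩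
    · left
      exact ⟨by rw [this, h1], by omega⟩
  -- boolean label
  set B : V → ℕ → Bool := fun u n => (decide (f^[n] u = x)) != decide (n % 2 = 1) with hB
  have aux : ∀ u n k, (f^[n] u = x ∨ f^[n] u = y) → B u n = B u (n + k) := by
    intro u n k h
    have hadd : f^[n + k] u = f^[k] (f^[n] u) := by
      rw [Nat.add_comm, Function.iterate_add_apply]
    rcases h with h | h
    · rw [h] at hadd
      rcases hxk k with ⟨h1, h2⟩ | ⟨h1, h2⟩
      · simp only [hB, hadd, h1, h]
        have : (n + k) % 2 = n % 2 := by omega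
        rw [this]
      · simp only [hB, hadd, h1, h]
        have hyx : (y = x) = False := by simp [Ne.symm hne]
        rw [hyx]
        rcases Nat.even_or_odd n with hn | hn
        · have h3 : n % 2 = 0 := Nat.even_iff.mp hn
          have h4 : (n + k) % 2 = 1 := by omega
          simp [h3, h4]
        · have h3 : n % 2 = 1 := Nat.odd_iff.mp hn
          have h4 : (n + k) % 2 = 0 := by omega
          simp [h3, h4]
    · rw [h] at hadd
      rcases hyk k with ⟨h1, h2⟩ | ⟨h1, h2⟩
      · simp only [hB, hadd, h1, h]
        have : (n + k) % 2 = n % 2 := by omega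
        rw [this]
      · simp only [hB, hadd, h1, h]
        have hyx : (y = x) = False := by simp [Ne.symm hne]
        rw [hyx]
        rcases Nat.even_or_odd n with hn | hn
        · have h3 : n % 2 = 0 := Nat.even_iff.mp hn
          have h4 : (n + k) % 2 = 1 := by omega
          simp [h3, h4]
        · have h3 : n % 2 = 1 := Nat.odd_iff.mp hn
          have h4 : (n + k) % 2 = 0 := by omega
          simp [h3, h4]
  have key : ∀ u n m, (f^[n] u = x ∨ f^[n] u = y) → (f^[m] u = x ∨ f^[m] u = y) →
      B u n = B u m := by
    intro u n m hn hm
    rcases Nat.le_total n m with hle | hle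
    · obtain ⟨k, rfl⟩ := Nat.exists_eq_add_of_le hle
      exact aux u n k hn
    · obtain ⟨k, rfl⟩ := Nat.exists_eq_add_of_le hle
      exact (aux u m k hm).symm
  -- every vertex eventually lands on {x, y}
  have hex : ∀ u : V, ∃ n, f^[n] u = x ∨ f^[n] u = y := by
    intro u
    by_cases hu : u = x
    · exact ⟨0, Or.inl hu⟩
    · obtain ⟨p⟩ := hconn.preconnected u x
      cases p with
      | nil => exact (hu rfl).elim
      | @cons _ w _ h q =>
        obtain ⟨n, hn⟩ := habs s(u, w) (G.mem_edgeSet.mpr h)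
        rw [Sym2.map_pair_eq, Sym2.eq_iff] at hn
        rcases hn with ⟨h1, _⟩ | ⟨h1, _⟩
        · exact ⟨n, Or.inl h1⟩
        · exact ⟨n, Or.inr h1⟩
  refine ⟨fun u => B u (hex u).choose, ?_⟩
  intro u v huv
  obtain ⟨n, hn⟩ := habs s(u, v) (G.mem_edgeSet.mpr huv)
  rw [Sym2.map_pair_eq, Sym2.eq_iff] at hn
  have hu := (hex u).choose_spec
  have hv := (hex v).choose_spec
  show B u (hex u).choose ≠ B v (hex v).choose
  rcases hn with ⟨h1, h2⟩ | ⟨h1, h2⟩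
  · rw [key u (hex u).choose n hu (Or.inl h1), key v (hex v).choose n hv (Or.inr h2)]
    simp [hB, h1, h2, Ne.symm hne]
  · rw [key u (hex u).choose n hu (Or.inr h1), key v (hex v).choose n hv (Or.inl h2)]
    simp [hB, h1, h2, Ne.symm hne]
end

section
/- Let G be a connected graph and f : G → G a simplicial map such that there is an edge E₀ = {x, y} with f(x) = x and f(y) = y, and every edge of G is eventually mapped to E₀. Then G is bipartite, with the two parts given by the vertices eventually mapped to x and the vertices eventually mapped to y. -/
/-- If a connected graph has a simplicial self-map `f` with an edge
`E₀ = {x, y}` whose endpoints are fixed by `f`, and every edge is eventually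
mapped to `E₀`, then the graph is bipartite with parts consisting of vertices
eventually mapped to `x`, resp. to `y`. -/
theorem bipartite_parts_of_fixed_edge {V : Type*} (G : SimpleGraph V)
    (hconn : G.Connected) (f : V → V)
    (hf : ∀ ⦃u v⦄, G.Adj u v → G.Adj (f u) (f v))
    (x y : V) (hE : G.Adj x y) (hx : f x = x) (hy : f y = y)
    (habs : ∀ e ∈ G.edgeSet, ∃ n : ℕ, Sym2.map (f^[n]) e = s(x, y)) :
    (∀ v : V, (∃ n : ℕ, f^[n] v = x) ∨ (∃ n : ℕ, f^[n] v = y)) ∧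
    (∀ v : V, ¬ ((∃ n : ℕ, f^[n] v = x) ∧ (∃ n : ℕ, f^[n] v = y))) ∧
    (∀ ⦃u v⦄, G.Adj u v → ((∃ n : ℕ, f^[n] u = x) ↔ (∃ n : ℕ, f^[n] v = y))) := by
  have hxfix : ∀ k, f^[k] x = x := fun k => Function.iterate_fixed hx k
  have hyfix : ∀ k, f^[k] y = y := fun k => Function.iterate_fixed hy k
  have hxy : x ≠ y := hE.ne
  have excl : ∀ v : V, ¬ ((∃ n : ℕ, f^[n] v = x) ∧ (∃ n : ℕ, f^[n] v = y)) := by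
    rintro v ⟨⟨m, hm⟩, ⟨n, hn⟩⟩
    rcases le_total m n with h | h
    · have hh : f^[n] v = x := by
        have h2 := Function.iterate_add_apply f (n - m) m v
        rw [Nat.sub_add_cancel h] at h2
        rw [h2, hm, hxfix]
      exact hxy (hh.symm.trans hn)
    · have hh : f^[m] v = y := by
        have h2 := Function.iterate_add_apply f (m - n) n v
        rw [Nat.sub_add_cancel h] at h2
        rw [h2, hn, hyfix]
      exact hxy (hm.symm.trans hh)
  have edgecase : ∀ ⦃u v⦄, G.Adj u v →
      ∃ N, (f^[N] u = x ∧ f^[N] v = y) ∨ (f^[N] u = y ∧ f^[N] v = x) := by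
    intro u v huv
    obtain ⟨N, hN⟩ := habs s(u, v) (G.mem_edgeSet.mpr huv)
    rw [Sym2.map_pair_eq, Sym2.eq_iff] at hN
    exact ⟨N, hN⟩
  refine ⟨?_, excl, ?_⟩
  · intro v
    obtain ⟨p⟩ := hconn.preconnected v x
    cases p with
    | nil => exact Or.inl ⟨0, rfl⟩
    | cons h q =>
      obtain ⟨N, hN | hN⟩ := edgecase h
      · exact Or.inl ⟨N, hN.1⟩
      · exact Or.inr ⟨N, hN.1⟩
  · intro u v huv
    obtain ⟨N, hN | hN⟩ := edgecase huv
    · exact ⟨fun _ => ⟨N, hN.2⟩, fun _ => ⟨N, hN.1⟩⟩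
    · constructor
      · rintro ⟨m, hm⟩
        exact absurd ⟨⟨m, hm⟩, ⟨N, hN.1⟩⟩ (excl u)
      · rintro ⟨m, hm⟩
        exact absurd ⟨⟨N, hN.2⟩, ⟨m, hm⟩⟩ (excl v)
end

section
/- Let f be a simplicial map of a connected graph G under which every vertex is pre-periodic, and suppose every edge of G is eventually mapped to a fixed edge E₀ = {x, y} (where f swaps or fixes x and y). Then every periodic vertex of f lies in {x, y}. -/
/-- If every vertex of a connected graph is pre-periodic under a
simplicial self-map `f`, and every edge is eventually mapped to a fixed edge
`E₀ = {x, y}` (where `f` fixes or swaps `x` and `y`), then every periodic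
vertex lies in `{x, y}`. -/
theorem periodic_vertices_in_fixed_edge {V : Type*} (G : SimpleGraph V)
    (hconn : G.Connected) (f : V → V)
    (hf : ∀ ⦃u v⦄, G.Adj u v → G.Adj (f u) (f v))
    (hpre : ∀ v : V, ∃ m n : ℕ, n < m ∧ f^[m] v = f^[n] v)
    (x y : V) (hE : G.Adj x y)
    (hfix : (f x = x ∧ f y = y) ∨ (f x = y ∧ f y = x))
    (habs : ∀ e ∈ G.edgeSet, ∃ n : ℕ, Sym2.map (f^[n]) e = s(x, y)) :
    ∀ (v : V) (n : ℕ), 0 < n → f^[n] v = v → v = x ∨ v = y := by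
  intro v n hn hper
  -- v has a neighbor
  by_cases hvx : v = x
  · exact Or.inl hvx
  obtain ⟨p⟩ := hconn v x
  obtain ⟨w, hadj⟩ : ∃ w, G.Adj v w := by
    cases p with
    | nil => exact absurd rfl hvx
    | cons h q => exact ⟨_, h⟩
  obtain ⟨k, hk⟩ := habs s(v, w) (G.mem_edgeSet.mpr hadj)
  rw [Sym2.map_pair_eq, Sym2.eq_iff] at hk
  have hkv : f^[k] v = x ∨ f^[k] v = y := by
    rcases hk with ⟨h, _⟩ | ⟨h, _⟩
    · exact Or.inl h
    · exact Or.inr h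
  -- once in {x,y}, always in {x,y}
  have hstay : ∀ j, f^[k + j] v = x ∨ f^[k + j] v = y := by
    intro j
    induction j with
    | zero => simpa using hkv
    | succ j ih =>
      have : f^[k + (j + 1)] v = f (f^[k + j] v) := by
        rw [← Nat.add_assoc, Function.iterate_succ_apply']
      rw [this]
      rcases ih with h | h <;> rw [h] <;> rcases hfix with ⟨h1, h2⟩ | ⟨h1, h2⟩ <;>
        simp [h1, h2]
  -- v = f^[n*k'] v for a multiple ≥ k
  have hmul : ∀ m : ℕ, f^[n * m] v = v := by
    intro m
    rw [Function.iterate_mul]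
    exact Function.iterate_fixed hper m
  have hle : k ≤ n * k := Nat.le_mul_of_pos_left k hn
  have := hstay (n * k - k)
  rw [Nat.add_sub_cancel' hle, hmul k] at this
  exact this
end

section
/- Let f : G → G be a simplicial map of a graph and K a cycle (simple closed walk) in G containing at most one vertex at which f fails to be locally injective. Then the image walk f(K) contains a cycle whose length is at most the length of K. -/
/-!
Rotate `K` so that it starts at the vertex where `f` may fail to be locally injective. At every
other vertex two distinct edges of `K` meet in two distinct neighbours, which `f` keeps apart, so
the image walk never backtracks. A closed walk of positive length is not a path, and a walk without
backtracking that is not a path contains a cycle: close it off at the first repeated vertex.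
-/

namespace SimpleGraph.Walk

variable {V W : Type*} {G : SimpleGraph V} {G' : SimpleGraph W}

theorem IsTrail.isChain_ne_edges {u v : V} {p : G.Walk u v} (hp : p.IsTrail) :
    p.edges.IsChain (· ≠ ·) :=
  hp.edges_nodup.isChain

theorem exists_isCycle_isSubwalk_of_isChain_ne_edges {u v : V} (p : G.Walk u v)
    (hp : p.edges.IsChain (· ≠ ·)) (hnp : ¬p.IsPath) :
    ∃ (x : V) (c : G.Walk x x), c.IsCycle ∧ c.IsSubwalk p := by
  classical
  match p with
  | .nil => exact absurd IsPath.nil hnp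
  | .cons (v := w) hadj q =>
    rw [edges_cons] at hp
    by_cases hq : q.IsPath
    · have hu : u ∈ q.support := by simpa [cons_isPath_iff, hq] using hnp
      refine ⟨u, cons hadj (q.takeUntil u hu), ?_, ?_⟩
      · refine (cons_isCycle_iff _ hadj).mpr ⟨hq.takeUntil hu, fun he ↦ ?_⟩
        -- a path from `w` to `u` using the edge `s(u, w)` is that edge, so `q` would backtrack
        rw [Sym2.eq_swap] at he
        have hedge : (q.takeUntil u hu).edges = [s(w, u)] := by
          rw [(hq.takeUntil hu).eq_adj_toWalk_of_mem_edges he]; rfl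
        obtain ⟨rest, hrest⟩ := hedge ▸ q.edges_takeUntil_prefix_edges hu
        rw [← hrest] at hp
        exact List.rel_of_isChain_cons_cons hp Sym2.eq_swap
      · rw [isSubwalk_iff_support_isInfix, support_cons, support_cons]
        exact (List.prefix_cons_inj u |>.mpr <| q.support_takeUntil_prefix_support hu).isInfix
    · obtain ⟨x, c, hc, hsub⟩ := exists_isCycle_isSubwalk_of_isChain_ne_edges q hp.tail hq
      exact ⟨x, c, hc, hsub.cons hadj⟩

theorem isChain_ne_edges_map (F : G →g G') {u v : V} (p : G.Walk u v)
    (hp : p.edges.IsChain (· ≠ ·))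
    (hF : ∀ i, 0 < i → i < p.length → Set.InjOn F (G.neighborSet (p.getVert i))) :
    (p.map F).edges.IsChain (· ≠ ·) := by
  match p with
  | .nil => simp
  | .cons _ .nil => simp
  | .cons (u := a) (v := b) h₁ (.cons (v := c) h₂ r) =>
    rw [edges_cons, edges_cons, List.isChain_cons_cons] at hp
    have hrec := isChain_ne_edges_map F (cons h₂ r) hp.2 fun i _ hil ↦ by
      simpa using hF (i + 1) (by omega) (by simp at hil ⊢; omega)
    have hac : a ≠ c := fun h ↦ hp.1 (by rw [h, Sym2.eq_swap])
    have hFac : F a ≠ F c := fun h ↦ hac <|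
      hF 1 one_pos (by simp) (by simpa using h₁.symm) (by simpa using h₂) h
    simp only [map_cons, edges_cons] at hrec ⊢
    exact List.isChain_cons_cons.mpr
      ⟨fun h ↦ hFac (Sym2.congr_right.mp (Sym2.eq_swap.trans h)), hrec⟩

theorem support_subset_of_rotate [DecidableEq V] {u v : V} {c : G.Walk v v} (h : u ∈ c.support) :
    (c.rotate u h).support ⊆ c.support := fun _ hx ↦ by
  rw [rotate, mem_support_append_iff] at hx
  exact hx.elim (c.support_dropUntil_subset_support h ·) (c.support_takeUntil_subset_support h ·)

theorem IsCycle.exists_isCycle_isSubwalk_map (F : G →g G') {x : V} {c : G.Walk x x}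
    (hc : c.IsCycle) (hF : ∀ v ∈ c.support, v ≠ x → Set.InjOn F (G.neighborSet v)) :
    ∃ (y : W) (d : G'.Walk y y), d.IsCycle ∧ d.IsSubwalk (c.map F) := by
  refine exists_isCycle_isSubwalk_of_isChain_ne_edges _
    (isChain_ne_edges_map F c hc.isTrail.isChain_ne_edges fun i hi hil ↦
      hF _ (c.getVert_mem_support i) ?_) ?_
  · rw [Ne, hc.getVert_endpoint_iff hil.le]
    omega
  · exact fun h ↦ hc.not_nil (by simpa using isPath_iff_nil.mp h)

theorem IsCycle.exists_isCycle_map_of_injOn_neighborSet (F : G →g G') {u : V} {c : G.Walk u u}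
    (hc : c.IsCycle) (w : V) (hF : ∀ v ∈ c.support, v ≠ w → Set.InjOn F (G.neighborSet v)) :
    ∃ (y : W) (d : G'.Walk y y),
      d.IsCycle ∧ d.length ≤ c.length ∧ d.edges ⊆ c.edges.map (Sym2.map F) := by
  classical
  by_cases hw : w ∈ c.support
  · obtain ⟨y, d, hd, hsub⟩ := (hc.rotate hw).exists_isCycle_isSubwalk_map F
      fun v hv ↦ hF v (support_subset_of_rotate hw hv)
    refine ⟨y, d, hd, ?_, ?_⟩
    · simpa using length_le_of_isSubwalk hsub
    · have hsub := hsub.edges_subset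
      rw [edges_map] at hsub
      exact List.Subset.trans hsub ((c.rotate_edges w hw).perm.map _).subset
  · obtain ⟨y, d, hd, hsub⟩ := hc.exists_isCycle_isSubwalk_map F
      fun v hv _ ↦ hF v hv (ne_of_mem_of_not_mem hv hw)
    exact ⟨y, d, hd, by simpa using length_le_of_isSubwalk hsub,
      by simpa using hsub.edges_subset⟩

end SimpleGraph.Walk

/-- If `K` is a cycle of a graph containing at most one vertex at
which the simplicial map `f` fails to be locally injective, then the image walk
`f(K)` contains a cycle of length at most the length of `K`. -/
theorem image_of_cycle_contains_cycle {V : Type*} (G : SimpleGraph V)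
    (f : V → V) (hf : ∀ ⦃u v⦄, G.Adj u v → G.Adj (f u) (f v))
    {u : V} (K : G.Walk u u) (hK : K.IsCycle)
    (hloc : ∃ w : V, ∀ v ∈ K.support, v ≠ w →
      Set.InjOn f (insert v (G.neighborSet v))) :
    ∃ (u' : V) (C : G.Walk u' u'), C.IsCycle ∧ C.length ≤ K.length ∧
      ∀ e ∈ C.edges, e ∈ K.edges.map (Sym2.map f) := by
  obtain ⟨w, hw⟩ := hloc
  exact hK.exists_isCycle_map_of_injOn_neighborSet ⟨f, fun h ↦ hf h⟩ w
    fun v hv hvw ↦ (hw v hv hvw).mono (Set.subset_insert v _)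
end

section
/- Let G be a connected graph, f : G → G a simplicial map such that every edge of G is eventually mapped to a single fixed edge E₀, and let c₁, c₂ be two distinguished vertices ('critical points') such that every cycle of G not passing through both c₁ and c₂ has the property that its image under f contains a strictly shorter or equal-length cycle. If k is the graph distance between c₁ and c₂, then every cycle in G has length at least 2k. -/
/-!
Every cycle that avoids one of the critical points can be replaced by a cycle of no greater
length inside its image. Since every edge is eventually mapped onto the fixed edge `E₀`, after
finitely many such replacements all edges of the cycle would have collapsed onto `E₀`, which no
cycle can do; so the process must stop at a cycle through both `c₁` and `c₂`, and such a cycle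
consists of two walks between `c₁` and `c₂`.
-/

open Filter Function

lemma Function.IsFixedPt.eventually_iterate_eq {α : Type*} {g : α → α} {a x : α}
    (ha : IsFixedPt g a) {m : ℕ} (hm : g^[m] x = a) : ∀ᶠ n in atTop, g^[n] x = a :=
  eventually_atTop.2 ⟨m, fun n hn => by
    obtain ⟨k, rfl⟩ := exists_add_of_le hn
    rw [add_comm, iterate_add_apply, hm, (ha.iterate k).eq]⟩

lemma Sym2.map_iterate {α : Type*} (f : α → α) (n : ℕ) : Sym2.map f^[n] = (Sym2.map f)^[n] := by
  induction n with
  | zero => exact Sym2.map_id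
  | succ n ih => rw [iterate_succ, iterate_succ, ← ih, Sym2.map_comp]

namespace SimpleGraph.Walk

variable {V : Type*} {G : SimpleGraph V}

lemma two_mul_dist_le_length_of_mem_support {a b : V} (p : G.Walk a a) (hb : b ∈ p.support) :
    2 * G.dist a b ≤ p.length := by
  classical
  have h₁ := G.dist_le (p.takeUntil b hb)
  have h₂ := G.dist_le (p.dropUntil b hb)
  have hsplit := congrArg length (p.take_spec hb)
  rw [length_append] at hsplit
  rw [G.dist_comm] at h₂
  omega

lemma two_mul_dist_le_length {u a b : V} (p : G.Walk u u) (ha : a ∈ p.support)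
    (hb : b ∈ p.support) : 2 * G.dist a b ≤ p.length := by
  classical
  have hsplit := p.take_spec ha
  set q := (p.dropUntil a ha).append (p.takeUntil a ha)
  have hbq : b ∈ q.support := by
    rw [← hsplit, mem_support_append_iff] at hb
    exact (mem_support_append_iff _ _).2 hb.symm
  calc 2 * G.dist a b ≤ q.length := q.two_mul_dist_le_length_of_mem_support hbq
    _ = p.length := by rw [← hsplit, length_append, length_append, add_comm]

lemma IsCycle.not_forall_edges_eq {u : V} {p : G.Walk u u} (hp : p.IsCycle) (e₀ : Sym2 V) :
    ¬ ∀ e ∈ p.edges, e = e₀ := fun h => by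
  have hrep := List.eq_replicate_iff.2 ⟨rfl, h⟩
  have hle := List.nodup_replicate.1 (hrep ▸ hp.edges_nodup)
  have := hp.three_le_length
  rw [length_edges] at hle
  omega

lemma IsCycle.two_mul_dist_le_length_of_iterate_edges_eq {g : Sym2 V → Sym2 V} {c₁ c₂ : V}
    (hcyc : ∀ (u : V) (K : G.Walk u u), K.IsCycle →
      ¬ (c₁ ∈ K.support ∧ c₂ ∈ K.support) →
      ∃ (u' : V) (C : G.Walk u' u'), C.IsCycle ∧ C.length ≤ K.length ∧
        ∀ e ∈ C.edges, e ∈ K.edges.map g)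
    {e₀ : Sym2 V} (N : ℕ) {u : V} {K : G.Walk u u} (hK : K.IsCycle)
    (hN : ∀ e ∈ K.edges, g^[N] e = e₀) : 2 * G.dist c₁ c₂ ≤ K.length := by
  induction N generalizing u K with
  | zero => exact absurd hN (hK.not_forall_edges_eq e₀)
  | succ N ih =>
    by_cases hc : c₁ ∈ K.support ∧ c₂ ∈ K.support
    · exact K.two_mul_dist_le_length hc.1 hc.2
    obtain ⟨u', C, hC, hlen, hsub⟩ := hcyc u K hK hc
    refine (ih hC fun e he => ?_).trans hlen
    obtain ⟨e', he', rfl⟩ := List.mem_map.1 (hsub e he)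
    rw [← iterate_succ_apply]
    exact hN e' he'

end SimpleGraph.Walk

theorem cycle_length_ge_twice_critical_distance_general {V : Type*} (G : SimpleGraph V)
    (f : V → V)
    (x y : V) (hfixE : Sym2.map f s(x, y) = s(x, y))
    (habs : ∀ e ∈ G.edgeSet, ∃ n : ℕ, Sym2.map (f^[n]) e = s(x, y))
    (c₁ c₂ : V)
    (hcyc : ∀ (u : V) (K : G.Walk u u), K.IsCycle →
      ¬ (c₁ ∈ K.support ∧ c₂ ∈ K.support) →
      ∃ (u' : V) (C : G.Walk u' u'), C.IsCycle ∧ C.length ≤ K.length ∧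
        ∀ e ∈ C.edges, e ∈ K.edges.map (Sym2.map f)) :
    ∀ (u : V) (K : G.Walk u u), K.IsCycle → 2 * G.dist c₁ c₂ ≤ K.length := by
  intro u K hK
  have hcollapse : ∀ e ∈ K.edges, ∀ᶠ n in atTop, (Sym2.map f)^[n] e = s(x, y) := fun e he => by
    obtain ⟨m, hm⟩ := habs e (K.edges_subset_edgeSet he)
    exact IsFixedPt.eventually_iterate_eq hfixE (Sym2.map_iterate f m ▸ hm)
  obtain ⟨N, hN⟩ := ((eventually_all_finite K.edges.finite_toSet).2 hcollapse).exists
  exact hK.two_mul_dist_le_length_of_iterate_edges_eq hcyc N hN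

/-- Let `G` be connected, `f` a simplicial self-map under which
every edge is eventually mapped to the fixed edge `E₀ = {x, y}`, and let
`c₁, c₂` be two critical vertices such that the image of any cycle missing one
of them contains a cycle of no greater length. Then every cycle of `G` has
length at least `2 * d(c₁, c₂)`. -/
theorem cycle_length_ge_twice_critical_distance {V : Type*} (G : SimpleGraph V)
    (hconn : G.Connected) (f : V → V)
    (hf : ∀ ⦃u v⦄, G.Adj u v → G.Adj (f u) (f v))
    (x y : V) (hE : G.Adj x y) (hfixE : Sym2.map f s(x, y) = s(x, y))
    (habs : ∀ e ∈ G.edgeSet, ∃ n : ℕ, Sym2.map (f^[n]) e = s(x, y))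
    (c₁ c₂ : V)
    (hcyc : ∀ (u : V) (K : G.Walk u u), K.IsCycle →
      ¬ (c₁ ∈ K.support ∧ c₂ ∈ K.support) →
      ∃ (u' : V) (C : G.Walk u' u'), C.IsCycle ∧ C.length ≤ K.length ∧
        ∀ e ∈ C.edges, e ∈ K.edges.map (Sym2.map f)) :
    ∀ (u : V) (K : G.Walk u u), K.IsCycle → 2 * G.dist c₁ c₂ ≤ K.length :=
  cycle_length_ge_twice_critical_distance_general G f x y hfixE habs c₁ c₂ hcyc
end

section
/- Let G be a graph, let E₀ be an edge, let S be the set of shortest cycles of G containing E₀, and suppose exactly one element C ∈ S has exactly two siblings while every other element of S has at most one sibling (siblings: distinct cycles in S intersecting in strictly more than E₀). Then every automorphism of G fixing E₀ (as an edge) fixes the cycle C setwise. -/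
variable {V : Type*}

/-- `H` is a shortest cycle of `G` through the edge `{x, y}`, viewed as a
subgraph. -/
def AnchoredCycleSG (G : SimpleGraph V) (x y : V) (H : G.Subgraph) : Prop :=
  ∃ (u : V) (K : G.Walk u u), K.IsCycle ∧ s(x, y) ∈ K.edges ∧
    H = K.toSubgraph ∧
    ∀ (u' : V) (K' : G.Walk u' u'), K'.IsCycle → s(x, y) ∈ K'.edges →
      K.length ≤ K'.length

/-- Siblings: distinct shortest cycles through `{x, y}` whose intersection
strictly contains the edge `{x, y}`. -/
def SGSibling (G : SimpleGraph V) {x y : V} (hxy : G.Adj x y)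
    (H₁ H₂ : G.Subgraph) : Prop :=
  AnchoredCycleSG G x y H₁ ∧ AnchoredCycleSG G x y H₂ ∧ H₁ ≠ H₂ ∧
    G.subgraphOfAdj hxy < H₁ ⊓ H₂

section Aux

open SimpleGraph

lemma aux_map_symm_map (G : SimpleGraph V) (φ : G ≃g G) (H : G.Subgraph) :
    (H.map φ.toHom).map φ.symm.toHom = H := by
  rw [← SimpleGraph.Subgraph.map_comp, Iso.symm_toHom_comp_toHom,
    SimpleGraph.Subgraph.map_id]

lemma aux_map_map_symm (G : SimpleGraph V) (φ : G ≃g G) (H : G.Subgraph) :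
    (H.map φ.symm.toHom).map φ.toHom = H := by
  rw [← SimpleGraph.Subgraph.map_comp, Iso.toHom_comp_symm_toHom,
    SimpleGraph.Subgraph.map_id]

/-- `Subgraph.map` along an automorphism, as an order isomorphism. -/
def subgraphMapIso (G : SimpleGraph V) (φ : G ≃g G) : G.Subgraph ≃o G.Subgraph where
  toFun := SimpleGraph.Subgraph.map φ.toHom
  invFun := SimpleGraph.Subgraph.map φ.symm.toHom
  left_inv := aux_map_symm_map G φ
  right_inv := aux_map_map_symm G φ
  map_rel_iff' := by
    intro H₁ H₂
    constructor
    · intro h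
      simp only [Equiv.coe_fn_mk] at h
      have := SimpleGraph.Subgraph.map_mono (f := φ.symm.toHom) h
      rwa [aux_map_symm_map, aux_map_symm_map] at this
    · exact fun h => SimpleGraph.Subgraph.map_mono h

lemma aux_hφ_symm {G : SimpleGraph V} {x y : V} (φ : G ≃g G)
    (hφ : Sym2.map (⇑φ) s(x, y) = s(x, y)) :
    Sym2.map (⇑φ.symm) s(x, y) = s(x, y) := by
  conv_lhs => rw [← hφ]
  rw [Sym2.map_map]
  simp

lemma aux_map_subgraphOfAdj {G : SimpleGraph V} {x y : V} (hxy : G.Adj x y)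
    (φ : G ≃g G) (hφ : Sym2.map (⇑φ) s(x, y) = s(x, y)) :
    (G.subgraphOfAdj hxy).map φ.toHom = G.subgraphOfAdj hxy := by
  have h' : s(φ x, φ y) = s(x, y) := by simpa using hφ
  rw [Sym2.eq_iff] at h'
  ext a b
  · rcases h' with ⟨h1, h2⟩ | ⟨h1, h2⟩ <;>
      simp [SimpleGraph.Subgraph.map_verts, Set.image_insert_eq, h1, h2,
        Set.pair_comm]
  · simp only [SimpleGraph.Subgraph.map_adj, SimpleGraph.subgraphOfAdj_adj,
      Relation.Map]
    constructor
    · rintro ⟨u, v, huv, rfl, rfl⟩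
      rw [Sym2.eq_iff] at huv
      rcases h' with ⟨h1, h2⟩ | ⟨h1, h2⟩ <;> rcases huv with ⟨rfl, rfl⟩ | ⟨rfl, rfl⟩ <;>
        simp [h1, h2, Sym2.eq_swap]
    · intro hab
      rw [Sym2.eq_iff] at hab
      rcases h' with ⟨h1, h2⟩ | ⟨h1, h2⟩ <;> rcases hab with ⟨rfl, rfl⟩ | ⟨rfl, rfl⟩
      · exact ⟨x, y, by simp, h1, h2⟩
      · exact ⟨y, x, by simp [Sym2.eq_swap], h2, h1⟩
      · exact ⟨y, x, by simp [Sym2.eq_swap], h2, h1⟩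
      · exact ⟨x, y, by simp, h1, h2⟩

lemma aux_map_injective (G : SimpleGraph V) (φ : G ≃g G) :
    Function.Injective (SimpleGraph.Subgraph.map φ.toHom) :=
  Function.LeftInverse.injective (aux_map_symm_map G φ)

lemma aux_map_inf (G : SimpleGraph V) (φ : G ≃g G) (H₁ H₂ : G.Subgraph) :
    (H₁ ⊓ H₂).map φ.toHom = H₁.map φ.toHom ⊓ H₂.map φ.toHom :=
  (subgraphMapIso G φ).map_inf H₁ H₂

lemma aux_anchored_map {G : SimpleGraph V} {x y : V} (φ : G ≃g G)
    (hφ : Sym2.map (⇑φ) s(x, y) = s(x, y)) {H : G.Subgraph}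
    (hH : AnchoredCycleSG G x y H) : AnchoredCycleSG G x y (H.map φ.toHom) := by
  obtain ⟨u, K, hc, he, rfl, hmin⟩ := hH
  refine ⟨φ u, K.map φ.toHom, hc.map φ.injective, ?_, ?_, ?_⟩
  · rw [SimpleGraph.Walk.edges_map]
    exact List.mem_map.mpr ⟨s(x, y), he, hφ⟩
  · rw [SimpleGraph.Walk.toSubgraph_map]
  · intro u' K' hc' he'
    rw [SimpleGraph.Walk.length_map]
    have he'' : s(x, y) ∈ (K'.map φ.symm.toHom).edges := by
      rw [SimpleGraph.Walk.edges_map]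
      exact List.mem_map.mpr ⟨s(x, y), he', aux_hφ_symm φ hφ⟩
    have := hmin _ (K'.map φ.symm.toHom) (hc'.map φ.symm.injective) he''
    rwa [SimpleGraph.Walk.length_map] at this

lemma aux_sibling_map {G : SimpleGraph V} {x y : V} (hxy : G.Adj x y)
    (φ : G ≃g G) (hφ : Sym2.map (⇑φ) s(x, y) = s(x, y)) {H₁ H₂ : G.Subgraph}
    (h : SGSibling G hxy H₁ H₂) :
    SGSibling G hxy (H₁.map φ.toHom) (H₂.map φ.toHom) := by
  obtain ⟨h1, h2, hne, hlt⟩ := h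
  refine ⟨aux_anchored_map φ hφ h1, aux_anchored_map φ hφ h2, ?_, ?_⟩
  · exact fun hEq => hne (aux_map_injective G φ hEq)
  · have : (G.subgraphOfAdj hxy).map φ.toHom < (H₁ ⊓ H₂).map φ.toHom :=
      lt_of_le_of_ne (SimpleGraph.Subgraph.map_mono hlt.le)
        (fun e => hlt.ne (aux_map_injective G φ e))
    rwa [aux_map_subgraphOfAdj hxy φ hφ, aux_map_inf G φ H₁ H₂] at this

/-- if exactly one shortest cycle `C` through `E₀ = {x, y}` has
exactly two siblings while every other one has at most one sibling, then every
automorphism of `G` fixing `E₀` fixes `C` setwise. -/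
theorem automorphism_fixes_unique_cycle (G : SimpleGraph V) (x y : V)
    (hxy : G.Adj x y) (C : G.Subgraph) (hC : AnchoredCycleSG G x y C)
    (hCtwo : {H : G.Subgraph | SGSibling G hxy C H}.ncard = 2)
    (hothers : ∀ H : G.Subgraph, AnchoredCycleSG G x y H → H ≠ C →
      {H' : G.Subgraph | SGSibling G hxy H H'}.ncard ≤ 1)
    (φ : G ≃g G) (hφ : Sym2.map (⇑φ) s(x, y) = s(x, y)) :
    C.map φ.toHom = C := by
  by_contra hne
  have hφ' := aux_hφ_symm φ hφ
  have hsets : {H : G.Subgraph | SGSibling G hxy (C.map φ.toHom) H} =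
      (SimpleGraph.Subgraph.map φ.toHom) '' {H : G.Subgraph | SGSibling G hxy C H} := by
    ext H
    simp only [Set.mem_setOf_eq, Set.mem_image]
    constructor
    · intro h
      refine ⟨H.map φ.symm.toHom, ?_, aux_map_map_symm G φ H⟩
      have := aux_sibling_map hxy φ.symm hφ' h
      rwa [aux_map_symm_map] at this
    · rintro ⟨H', hH', rfl⟩
      exact aux_sibling_map hxy φ hφ hH'
  have hcard : {H : G.Subgraph | SGSibling G hxy (C.map φ.toHom) H}.ncard = 2 := by
    rw [hsets, Set.ncard_image_of_injective _ (aux_map_injective G φ), hCtwo]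
  have := hothers (C.map φ.toHom) (aux_anchored_map φ hφ hC) hne
  omega

end Aux
end
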